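/- In the DGA A', the cycle c is not a boundary, and for every pair x, y with d(x) = d(y) = a₁a₂ such that a₀x + za₂ is a boundary for some z with d(z) = a₀a₁, and a₁w + ya₃ is a boundary for some w with d(w) = a₂a₃, the element x + y is homologous to c modulo (ā₀ \\ ā₂) + (ā₁ // ā₃); in particular zero does not lie in the coindeterminacy of ⟨ā₀,ā₁,ā₂⟩ and ⟨ā₁,ā₂,ā₃⟩. -/

import Mathlib

open MvPolynomial

/-- The polynomial algebra over F₂ on generators
a₀, a₁, a₂, a₃, a₀₁, a₁₂, a₂₃, c, a₀₂, a₁₃ (indices 0,…,9). -/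
abbrev P : Type := MvPolynomial (Fin 10) (ZMod 2)

/-- Values of the differential of A' on the generators: as for A except
d(a₁₃)=a₁a₂₃+(a₁₂+c)a₃. -/
noncomputable def dvalA' : Fin 10 → P :=
  ![0, 0, 0, 0, X 0 * X 1, X 1 * X 2, X 2 * X 3, 0,
    X 0 * X 5 + X 4 * X 2, X 1 * X 6 + (X 5 + X 7) * X 3]

/-- The differential of A': the unique F₂-linear derivation with the values
`dvalA'` on the generators. -/
noncomputable def dA' : P → P := fun p => mkDerivation (ZMod 2) dvalA' p

/-! Every generator has a quadratic (or zero) differential, so `d` raises polynomial degree by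
one and the coefficient in `d u` of a monomial of degree at most two only depends on the linear
part of `u`. Hence boundaries have no `c`-term and no `a₀c`-term. If `a₀x + za₂ = d u₁`, reading
off the `a₀c`-coefficient shows that `x` has no `c`-term. If `a₁w + ya₃ = d u₂` with
`d w = a₂a₃`, then `w` contains `a₂₃`, so the `a₁a₂₃`-coefficient forces `a₁₃` into `u₂`, and
then the `ca₃`-term of `d a₁₃` forces `c` into `y`. So `x + y` has `c`-coefficient one and is
not a boundary. The explicit homology `x + y ~ c` uses `c₁ = x + a₁₂` and `c₂ = y + a₁₂ + c`. -/

open Finsupp (single)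

theorem Finsupp.exists_eq_single_of_degree_eq_one {σ : Type*} {n : σ →₀ ℕ} (hn : n.degree = 1) :
    ∃ i, n = single i 1 := by
  obtain ⟨i, hi⟩ : n.support.Nonempty := by
    rw [Finset.nonempty_iff_ne_empty, Ne, Finsupp.support_eq_empty, ← Finsupp.degree_eq_zero_iff]
    omega
  have hle : single i 1 ≤ n := by
    rw [Finsupp.single_le_iff]
    exact Nat.one_le_iff_ne_zero.mpr (Finsupp.mem_support_iff.mp hi)
  have hsplit := add_tsub_cancel_of_le hle
  have hrest : (n - single i 1).degree = 0 := by
    have := congrArg Finsupp.degree hsplit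
    rw [map_add, Finsupp.degree_single] at this
    omega
  rw [Finsupp.degree_eq_zero_iff] at hrest
  exact ⟨i, by rw [← hsplit, hrest, add_zero]⟩

namespace MvPolynomial

variable {σ R : Type*} [CommSemiring R] {f : σ → MvPolynomial σ R}

theorem isHomogeneous_mkDerivation_monomial (hf : ∀ i, (f i).IsHomogeneous 2)
    (s : σ →₀ ℕ) (r : R) :
    (mkDerivation R f (monomial s r)).IsHomogeneous (s.degree + 1) := by
  rw [mkDerivation_monomial, Finsupp.sum]
  refine Submodule.smul_mem (homogeneousSubmodule σ R _) r
    (IsHomogeneous.sum _ _ _ fun i hi => ?_)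
  have hle : single i 1 ≤ s := by
    rw [Finsupp.single_le_iff]
    exact Nat.one_le_iff_ne_zero.mpr (Finsupp.mem_support_iff.mp hi)
  have hdeg : (s - single i 1).degree + 1 = s.degree := by
    conv_rhs => rw [← add_tsub_cancel_of_le hle]
    rw [map_add, Finsupp.degree_single, add_comm]
  rw [← hdeg, smul_eq_mul, add_assoc]
  exact (isHomogeneous_monomial _ rfl).mul (hf i)

theorem coeff_mkDerivation_eq_zero_of_degree_le_one (hf : ∀ i, (f i).IsHomogeneous 2)
    (p : MvPolynomial σ R) {m : σ →₀ ℕ} (hm : m.degree ≤ 1) :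
    coeff m (mkDerivation R f p) = 0 := by
  induction p using MvPolynomial.induction_on' with
  | monomial s r =>
    rcases eq_or_ne s 0 with rfl | hs
    · simp
    · refine (isHomogeneous_mkDerivation_monomial hf s r).coeff_eq_zero ?_
      rw [Ne, ← Finsupp.degree_eq_zero_iff] at hs
      omega
  | add p q hp hq => rw [map_add, coeff_add, hp, hq, add_zero]

theorem coeff_mkDerivation_of_degree_eq_two [Fintype σ] (hf : ∀ i, (f i).IsHomogeneous 2)
    (p : MvPolynomial σ R) {m : σ →₀ ℕ} (hm : m.degree = 2) :
    coeff m (mkDerivation R f p) = ∑ i, coeff (single i 1) p * coeff m (f i) := by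
  classical
  induction p using MvPolynomial.induction_on' with
  | monomial s r =>
    by_cases hs : s.degree = 1
    · obtain ⟨j, rfl⟩ := Finsupp.exists_eq_single_of_degree_eq_one hs
      have hcoeff (i : σ) (hij : i ≠ j) :
          coeff (single i 1) (monomial (single j 1) r) = 0 := by
        rw [coeff_monomial, if_neg fun h => hij (Finsupp.single_left_injective one_ne_zero h).symm]
      rw [Finset.sum_eq_single j (fun i _ hij => by rw [hcoeff i hij, zero_mul]) (by simp)]
      simp [mkDerivation_monomial, coeff_monomial]
    · rw [(isHomogeneous_mkDerivation_monomial hf s r).coeff_eq_zero (by omega)]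
      refine (Finset.sum_eq_zero fun i _ => ?_).symm
      rw [coeff_monomial, if_neg (by rintro rfl; simp at hs), zero_mul]
  | add p q hp hq => simp only [map_add, coeff_add, hp, hq, add_mul, Finset.sum_add_distrib]

end MvPolynomial

theorem isHomogeneous_dvalA' (i : Fin 10) : (dvalA' i).IsHomogeneous 2 := by
  have hXX (a b : Fin 10) : (X a * X b : P).IsHomogeneous 2 :=
    (isHomogeneous_X _ a).mul (isHomogeneous_X _ b)
  fin_cases i <;> simp [dvalA', add_mul, isHomogeneous_zero, hXX, IsHomogeneous.add]

theorem dA'_add (p q : P) : dA' (p + q) = dA' p + dA' q :=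
  map_add (mkDerivation (ZMod 2) dvalA') p q

theorem dA'_X (i : Fin 10) : dA' (X i) = dvalA' i :=
  mkDerivation_X (ZMod 2) dvalA' i

theorem X_mul_X_eq_monomial (a b : Fin 10) :
    (X a * X b : P) = monomial (single a 1 + single b 1) 1 := by
  rw [X, X, monomial_mul, one_mul]

theorem coeff_dA'_of_degree_eq_two (p : P) {m : Fin 10 →₀ ℕ} (hm : m.degree = 2) :
    coeff m (dA' p) = ∑ i, coeff (single i 1) p * coeff m (dvalA' i) :=
  coeff_mkDerivation_of_degree_eq_two isHomogeneous_dvalA' p hm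

theorem coeff_c_dA' (p : P) : coeff (single 7 1) (dA' p) = 0 :=
  coeff_mkDerivation_eq_zero_of_degree_le_one isHomogeneous_dvalA' p (by simp)

theorem coeff_a₀c_dA' (p : P) : coeff (single 0 1 + single 7 1) (dA' p) = 0 := by
  simp [coeff_dA'_of_degree_eq_two, Fin.sum_univ_succ, dvalA', add_mul, X_mul_X_eq_monomial,
    coeff_monomial, Finsupp.single_add_single_eq_single_add_single, Finsupp.single_eq_single_iff]

theorem coeff_a₂a₃_dA' (p : P) :
    coeff (single 2 1 + single 3 1) (dA' p) = coeff (single 6 1) p := by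
  simp [coeff_dA'_of_degree_eq_two, Fin.sum_univ_succ, dvalA', add_mul, X_mul_X_eq_monomial,
    coeff_monomial, Finsupp.single_add_single_eq_single_add_single, Finsupp.single_eq_single_iff]

theorem coeff_a₁a₂₃_dA' (p : P) :
    coeff (single 1 1 + single 6 1) (dA' p) = coeff (single 9 1) p := by
  simp [coeff_dA'_of_degree_eq_two, Fin.sum_univ_succ, dvalA', add_mul, X_mul_X_eq_monomial,
    coeff_monomial, Finsupp.single_add_single_eq_single_add_single, Finsupp.single_eq_single_iff]

theorem coeff_ca₃_dA' (p : P) :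
    coeff (single 7 1 + single 3 1) (dA' p) = coeff (single 9 1) p := by
  simp [coeff_dA'_of_degree_eq_two, Fin.sum_univ_succ, dvalA', add_mul, X_mul_X_eq_monomial,
    coeff_monomial, Finsupp.single_add_single_eq_single_add_single, Finsupp.single_eq_single_iff]

theorem not_exists_dA'_eq_of_coeff_c_ne_zero {p : P} (hp : coeff (single 7 1) p ≠ 0) :
    ¬ ∃ u, dA' u = p := by
  rintro ⟨u, rfl⟩
  exact hp (coeff_c_dA' u)

theorem coeff_c_eq_zero_of_dA'_eq {x z u : P} (hu : dA' u = X 0 * x + z * X 2) :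
    coeff (single 7 1) x = 0 := by
  have h := coeff_a₀c_dA' u
  rwa [hu, coeff_add, coeff_X_mul, coeff_mul_X', if_neg (by simp), add_zero] at h

theorem coeff_c_eq_one_of_dA'_eq {y w u : P} (hw : dA' w = X 2 * X 3)
    (hu : dA' u = X 1 * w + y * X 3) : coeff (single 7 1) y = 1 := by
  have hw₆ : coeff (single 6 1) w = 1 := by
    rw [← coeff_a₂a₃_dA', hw, coeff_X_mul, coeff_single_X]
    simp
  have hu₉ : coeff (single 9 1) u = 1 := by
    rw [← coeff_a₁a₂₃_dA', hu, coeff_add, coeff_X_mul, hw₆, coeff_mul_X', if_neg (by simp),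
      add_zero]
  rw [← hu₉, ← coeff_ca₃_dA', hu, coeff_add, coeff_X_mul', if_neg (by simp), coeff_mul_X,
    zero_add]

theorem x_add_a₁₂_mem_a₀_backslash_a₂ {x z u : P} (hx : dA' x = X 1 * X 2)
    (hz : dA' z = X 0 * X 1) (hu : dA' u = X 0 * x + z * X 2) :
    dA' (x + X 5) = 0 ∧ ∃ z', dA' z' = 0 ∧ ∃ u', dA' u' = X 0 * (x + X 5) + z' * X 2 := by
  refine ⟨?_, z + X 4, ?_, u + X 8, ?_⟩ <;>
    simp only [dA'_add, dA'_X, dvalA', hx, hz, hu, Matrix.cons_val, CharTwo.add_self_eq_zero]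
  ring

theorem y_add_a₁₂_add_c_mem_a₁_slash_a₃ {y w u : P} (hy : dA' y = X 1 * X 2)
    (hw : dA' w = X 2 * X 3) (hu : dA' u = X 1 * w + y * X 3) :
    dA' (y + X 5 + X 7) = 0 ∧
      ∃ w', dA' w' = 0 ∧ ∃ u', dA' u' = X 1 * w' + (y + X 5 + X 7) * X 3 := by
  refine ⟨?_, w + X 6, ?_, u + X 9, ?_⟩ <;>
    simp only [dA'_add, dA'_X, dvalA', hy, hw, hu, Matrix.cons_val, CharTwo.add_self_eq_zero]
  ring

/-- In A', the cycle c is not a boundary; every element x + y of the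
coindeterminacy of ⟨ā₀,ā₁,ā₂⟩ and ⟨ā₁,ā₂,ā₃⟩ is homologous to c modulo
(ā₀ \\ ā₂) + (ā₁ // ā₃); in particular zero is not in the coindeterminacy. -/
theorem stmt_15 :
    (dA' (X 7) = 0 ∧ ¬ ∃ u : P, dA' u = X 7) ∧
    (∀ x y : P, dA' x = X 1 * X 2 →
      (∃ z, dA' z = X 0 * X 1 ∧ ∃ u, dA' u = X 0 * x + z * X 2) →
      dA' y = X 1 * X 2 →
      (∃ w, dA' w = X 2 * X 3 ∧ ∃ u, dA' u = X 1 * w + y * X 3) →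
      ∃ c₁ c₂ : P,
        (dA' c₁ = 0 ∧ ∃ z, dA' z = 0 ∧ ∃ u, dA' u = X 0 * c₁ + z * X 2) ∧
        (dA' c₂ = 0 ∧ ∃ z, dA' z = 0 ∧ ∃ u, dA' u = X 1 * z + c₂ * X 3) ∧
        ∃ u, dA' u = x + y + X 7 + c₁ + c₂) ∧
    ¬ ∃ x y : P, dA' x = X 1 * X 2 ∧
      (∃ z, dA' z = X 0 * X 1 ∧ ∃ u, dA' u = X 0 * x + z * X 2) ∧
      dA' y = X 1 * X 2 ∧
      (∃ w, dA' w = X 2 * X 3 ∧ ∃ u, dA' u = X 1 * w + y * X 3) ∧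
      ∃ u, dA' u = x + y := by
  refine ⟨⟨dA'_X 7, not_exists_dA'_eq_of_coeff_c_ne_zero (by simp)⟩, ?_, ?_⟩
  · rintro x y hx ⟨z, hz, u₁, hu₁⟩ hy ⟨w, hw, u₂, hu₂⟩
    refine ⟨x + X 5, y + X 5 + X 7, x_add_a₁₂_mem_a₀_backslash_a₂ hx hz hu₁,
      y_add_a₁₂_add_c_mem_a₁_slash_a₃ hy hw hu₂, 0, ?_⟩
    rw [dA', map_zero]
    linear_combination (-(x + y + X 5 + X 7)) * (CharTwo.two_eq_zero : (2 : P) = 0)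
  · rintro ⟨x, y, -, ⟨z, -, u₁, hu₁⟩, -, ⟨w, hw, u₂, hu₂⟩, hxy⟩
    refine not_exists_dA'_eq_of_coeff_c_ne_zero ?_ hxy
    rw [coeff_add, coeff_c_eq_zero_of_dA'_eq hu₁, coeff_c_eq_one_of_dA'_eq hw hu₂, zero_add]
    exact one_ne_zero
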